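/- Let G = D(n,l) be the Dandelion graph with n > l ≥ 2. If n - l + 1 < ⌈n/2⌉ (equivalently Δ(G) < ⌈(|E(G)|+1)/2⌉), then ⌈n/2⌉ ≤ es(G) ≤ n - l + ⌈l/2⌉. -/

import Mathlib

/-- A vertex `k`-labeling `φ : V → {1,…,k}` of `G` is *edge irregular* if the
weights `φ x + φ y` of distinct edges are distinct. -/
def IsEdgeIrregular {V : Type*} (G : SimpleGraph V) (k : ℕ) (φ : V → ℕ) : Prop :=
  (∀ v, 1 ≤ φ v ∧ φ v ≤ k) ∧
  ∀ u v x y, G.Adj u v → G.Adj x y → s(u, v) ≠ s(x, y) → φ u + φ v ≠ φ x + φ y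

/-- The edge irregularity strength `es G`. -/
noncomputable def es {V : Type*} (G : SimpleGraph V) : ℕ :=
  sInf {k | ∃ φ : V → ℕ, IsEdgeIrregular G k φ}

/-- The Dandelion graph `D(n,l)` on `Fin n`: path vertices `p_j` are `0,…,l-1`,
leaves `x_1,…,x_{n-l}` are `l,…,n-1`, each leaf adjacent to the center `0`. -/
def Dandelion (n l : ℕ) : SimpleGraph (Fin n) :=
  SimpleGraph.fromRel (fun a b =>
    (a.val = 0 ∧ l ≤ b.val) ∨ (a.val + 1 = b.val ∧ b.val ≤ l - 1))

instance (n l : ℕ) : DecidableRel (Dandelion n l).Adj := fun a b =>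
  decidable_of_iff _ (SimpleGraph.fromRel_adj _ a b).symm

/-!
Any edge irregular `k`-labeling sends the edges injectively into the weights `2, …, 2k`, and
`D(n,l)` is a tree with `n - 1` edges, so `n - 1 ≤ 2k - 1`.
For the upper bound, give the leaves `x_1, …, x_{n-l}` the labels `1, …, n-l`, and along the path
give `p_0, p_2, p_4, …` the labels `1, 2, 3, …` and `p_1, p_3, …` the labels `n-l+1, n-l+2, …`.
Then the leaf edges have weights `2, …, n-l+1` and the path edge `p_{j-1} p_j` has weight
`n-l+1+j`.
-/

open Finset

def edgeWeight {V : Type*} (φ : V → ℕ) : Sym2 V → ℕ :=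
  Sym2.lift ⟨fun a b => φ a + φ b, fun _ _ => add_comm _ _⟩

@[simp]
lemma edgeWeight_mk {V : Type*} (φ : V → ℕ) (a b : V) : edgeWeight φ s(a, b) = φ a + φ b :=
  rfl

section EdgeIrregular

variable {V : Type*} {G : SimpleGraph V} {k : ℕ} {φ : V → ℕ}

lemma isEdgeIrregular_iff :
    IsEdgeIrregular G k φ ↔
      (∀ v, 1 ≤ φ v ∧ φ v ≤ k) ∧ Set.InjOn (edgeWeight φ) G.edgeSet := by
  refine and_congr_right fun _ => ⟨fun h e he e' he' hw => ?_, fun h u v x y huv hxy hne hw => ?_⟩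
  · induction e using Sym2.ind with | _ u v => ?_
    induction e' using Sym2.ind with | _ x y => ?_
    by_contra hne
    exact h u v x y he he' hne hw
  · exact hne (h huv hxy hw)

lemma IsEdgeIrregular.edgeWeight_mem_Icc (hφ : IsEdgeIrregular G k φ) (e : Sym2 V) :
    edgeWeight φ e ∈ Icc 2 (2 * k) := by
  induction e using Sym2.ind with | _ u v => ?_
  have hu := hφ.1 u
  have hv := hφ.1 v
  simp only [edgeWeight_mk, mem_Icc]
  omega

lemma IsEdgeIrregular.card_edgeFinset_le [Fintype G.edgeSet]
    (hφ : IsEdgeIrregular G k φ) : #G.edgeFinset ≤ 2 * k - 1 := by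
  have hcard := card_le_card_of_injOn (s := G.edgeFinset) (edgeWeight φ)
    (fun e _ => hφ.edgeWeight_mem_Icc e)
    (by simpa only [SimpleGraph.coe_edgeFinset] using (isEdgeIrregular_iff.mp hφ).2)
  rw [Nat.card_Icc] at hcard
  omega

lemma IsEdgeIrregular.es_le (hφ : IsEdgeIrregular G k φ) : es G ≤ k :=
  Nat.sInf_le ⟨φ, hφ⟩

lemma IsEdgeIrregular.exists_isEdgeIrregular_es (hφ : IsEdgeIrregular G k φ) :
    ∃ ψ, IsEdgeIrregular G (es G) ψ :=
  Nat.sInf_mem (⟨k, φ, hφ⟩ : Set.Nonempty {k | ∃ φ, IsEdgeIrregular G k φ})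

end EdgeIrregular

namespace Dandelion

variable {n l : ℕ}

def parent (l : ℕ) (v : Fin n) : Fin n :=
  if l ≤ v.val then ⟨0, v.pos⟩ else ⟨v.val - 1, by omega⟩

lemma val_parent (v : Fin n) : (parent l v).val = if l ≤ v.val then 0 else v.val - 1 :=
  apply_ite Fin.val _ _ _

lemma adj_parent {v : Fin n} (hv : 0 < v.val) : (Dandelion n l).Adj (parent l v) v := by
  have := val_parent (l := l) v
  rw [Dandelion, SimpleGraph.fromRel_adj, Ne, Fin.ext_iff]
  split_ifs at this <;> omega

lemma edgeSet_eq_image :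
    (Dandelion n l).edgeSet = (fun v => s(parent l v, v)) '' {v : Fin n | 0 < v.val} := by
  ext e
  induction e using Sym2.ind with | _ a b => ?_
  simp only [SimpleGraph.mem_edgeSet, Set.mem_image, Set.mem_ofPred_eq]
  constructor
  · intro h
    have ha := val_parent (l := l) a
    have hb := val_parent (l := l) b
    rw [Dandelion, SimpleGraph.fromRel_adj, Ne, Fin.ext_iff] at h
    rcases h with ⟨hne, h | h⟩
    · refine ⟨b, by omega, Sym2.eq_iff.mpr (Or.inl ⟨Fin.ext ?_, rfl⟩)⟩
      split_ifs at hb <;> omega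
    · refine ⟨a, by omega, Sym2.eq_iff.mpr (Or.inr ⟨Fin.ext ?_, rfl⟩)⟩
      split_ifs at ha <;> omega
  · rintro ⟨v, hv, he⟩
    rw [← SimpleGraph.mem_edgeSet, ← he]
    exact adj_parent hv

lemma injOn_parentEdge : Set.InjOn (fun v : Fin n => s(parent l v, v)) {v | 0 < v.val} := by
  intro v hv w hw h
  have := val_parent (l := l) v
  have := val_parent (l := l) w
  simp only [Set.mem_ofPred_eq, Sym2.eq_iff, Fin.ext_iff] at hv hw h
  split_ifs at * <;> omega

lemma card_edgeFinset : #(Dandelion n l).edgeFinset = n - 1 := by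
  have hedges : (Dandelion n l).edgeFinset =
      (univ.filter fun v : Fin n => ¬ v.val < 1).image (fun v => s(parent l v, v)) := by
    apply coe_injective
    simp only [SimpleGraph.coe_edgeFinset, coe_image, coe_filter, mem_univ, true_and, not_lt,
      edgeSet_eq_image]
    rfl
  have hsplit := card_filter_add_card_filter_not (s := univ) (fun v : Fin n => v.val < 1)
  rw [hedges, card_image_of_injOn]
  · rw [Fin.card_filter_val_lt, card_univ, Fintype.card_fin] at hsplit
    omega
  · intro v hv w hw h
    exact injOn_parentEdge (by simpa [Nat.pos_iff_ne_zero] using hv)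
      (by simpa [Nat.pos_iff_ne_zero] using hw) h

def label (n l : ℕ) (v : Fin n) : ℕ :=
  if l ≤ v.val then v.val - l + 1
  else if Even v.val then v.val / 2 + 1 else n - l + 1 + v.val / 2

lemma one_le_label_and_label_le (hn : l < n) (v : Fin n) :
    1 ≤ label n l v ∧ label n l v ≤ n - l + (l + 1) / 2 := by
  unfold label
  split_ifs <;> grind

lemma edgeWeight_label_parentEdge (hl : 0 < l) {v : Fin n} (hv : 0 < v.val) :
    edgeWeight (label n l) s(parent l v, v) =
      if l ≤ v.val then v.val - l + 2 else n - l + 1 + v.val := by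
  rw [edgeWeight_mk, label, label, val_parent]
  split_ifs <;> grind

lemma isEdgeIrregular_label (hl : 0 < l) (hn : l < n) :
    IsEdgeIrregular (Dandelion n l) (n - l + (l + 1) / 2) (label n l) := by
  refine isEdgeIrregular_iff.mpr ⟨one_le_label_and_label_le hn, ?_⟩
  rw [edgeSet_eq_image]
  refine Set.InjOn.image_of_comp fun v hv w hw h => Fin.ext ?_
  simp only [Set.mem_ofPred_eq, Function.comp_apply] at hv hw h
  rw [edgeWeight_label_parentEdge hl hv, edgeWeight_label_parentEdge hl hw] at h
  split_ifs at h <;> omega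

end Dandelion

theorem stmt_6_general (n l : ℕ) (hl : 2 ≤ l) (hn : l < n) :
    (n + 1) / 2 ≤ es (Dandelion n l) ∧ es (Dandelion n l) ≤ n - l + (l + 1) / 2 := by
  have hlabel := Dandelion.isEdgeIrregular_label (by omega : 0 < l) hn
  obtain ⟨ψ, hψ⟩ := hlabel.exists_isEdgeIrregular_es
  have hcard := hψ.card_edgeFinset_le
  rw [Dandelion.card_edgeFinset] at hcard
  exact ⟨by omega, hlabel.es_le⟩

/-- If `n-l+1 < ⌈n/2⌉`, then `⌈n/2⌉ ≤ es(D(n,l)) ≤ n - l + ⌈l/2⌉`. -/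
theorem stmt_6 (n l : ℕ) (hl : 2 ≤ l) (hn : l < n) (h : n - l + 1 < (n + 1) / 2) :
    (n + 1) / 2 ≤ es (Dandelion n l) ∧ es (Dandelion n l) ≤ n - l + (l + 1) / 2 :=
  stmt_6_general n l hl hn
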